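/- arXiv:1208.5861 — 4 statements merged into one kernel-verified Lean document; each statement's English description precedes it below -/
import Mathlib

section
/- Let L be an m-dimensional 3-Lie algebra possessing an abelian ideal I of dimension m−2. Then L is 2-step solvable, i.e. [[L,L,L],[L,L,L],L] = 0. -/
open Module

/-- A 3-Lie algebra structure on a vector space `L` over `F`: a trilinear,
fully alternating bracket satisfying the fundamental (generalized Jacobi) identity. -/
structure ThreeLie (F : Type*) [Field F] (L : Type*) [AddCommGroup L] [Module F L] where
  br : L →ₗ[F] L →ₗ[F] L →ₗ[F] L
  alt₁₂ : ∀ x z : L, br x x z = 0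
  alt₂₃ : ∀ x y : L, br x y y = 0
  fund : ∀ x₁ x₂ x₃ y₂ y₃ : L,
    br (br x₁ x₂ x₃) y₂ y₃ =
      br (br x₁ y₂ y₃) x₂ x₃ + br x₁ (br x₂ y₂ y₃) x₃ + br x₁ x₂ (br x₃ y₂ y₃)

namespace ThreeLie

variable {F : Type*} [Field F] {L : Type*} [AddCommGroup L] [Module F L] (T : ThreeLie F L)

/-- `I` is an ideal: `[I, L, L] ⊆ I`. -/
def IsIdeal (I : Submodule F L) : Prop := ∀ a ∈ I, ∀ x y : L, T.br a x y ∈ I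

/-- `I` is an abelian ideal: an ideal with `[I, I, L] = 0`. -/
def IsAbelianIdeal (I : Submodule F L) : Prop :=
  T.IsIdeal I ∧ ∀ a ∈ I, ∀ b ∈ I, ∀ x : L, T.br a b x = 0

/-- `A` is an abelian subalgebra: `[A, A, A] = 0`. -/
def IsAbelianSubalgebra (A : Submodule F L) : Prop :=
  ∀ a ∈ A, ∀ b ∈ A, ∀ c ∈ A, T.br a b c = 0

/-- `I` is a hypo-abelian ideal: an ideal with `[I,I,I] = 0` but `[I,I,L] ≠ 0`. -/
def IsHypoAbelianIdeal (I : Submodule F L) : Prop :=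
  T.IsIdeal I ∧ T.IsAbelianSubalgebra I ∧ ¬ (∀ a ∈ I, ∀ b ∈ I, ∀ x : L, T.br a b x = 0)

/-- The derived algebra `L¹ = [L, L, L]`. -/
def derived : Submodule F L := Submodule.span F {z | ∃ x y w : L, z = T.br x y w}

/-- The center `Z(L)`. -/
def center : Submodule F L where
  carrier := {x | ∀ y z : L, T.br x y z = 0}
  add_mem' := by
    intro a b ha hb y z
    simp [map_add, LinearMap.add_apply, ha y z, hb y z]
  zero_mem' := by intro y z; simp
  smul_mem' := by
    intro c a ha y z
    simp [map_smul, LinearMap.smul_apply, ha y z]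

/-- The lower central series. -/
def lcs : ℕ → Submodule F L
  | 0 => ⊤
  | n + 1 => Submodule.span F {z | ∃ a ∈ lcs n, ∃ x y : L, z = T.br a x y}

/-- Nilpotency. -/
def IsNilpotent : Prop := ∃ s : ℕ, T.lcs s = ⊥

end ThreeLie

/-!
Since `I` is an ideal of codimension two, any three elements of `L` are linearly dependent
modulo `I`; feeding a dependence relation into each slot of the alternating bracket shows
`[L, L, L] ⊆ I`. Hence `[L¹, L¹, L] ⊆ [I, I, L] = 0`.
-/

namespace ThreeLie

variable {F : Type*} [Field F] {L : Type*} [AddCommGroup L] [Module F L] (T : ThreeLie F L)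

theorem br_swap₁₂ (x y z : L) : T.br x y z = -T.br y x z := by
  have h := T.alt₁₂ (x + y) z
  simp only [map_add, LinearMap.add_apply, T.alt₁₂] at h
  linear_combination (norm := module) h

theorem br_swap₂₃ (x y z : L) : T.br x y z = -T.br x z y := by
  have h := T.alt₂₃ x (y + z)
  simp only [map_add, LinearMap.add_apply, T.alt₂₃] at h
  linear_combination (norm := module) h

theorem alt₁₃ (x y : L) : T.br x y x = 0 := by
  rw [T.br_swap₂₃, T.alt₁₂, neg_zero]

variable {T} {I : Submodule F L}

theorem IsIdeal.br_mem_middle (hI : T.IsIdeal I) (x : L) {a : L} (ha : a ∈ I) (y : L) :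
    T.br x a y ∈ I := by
  rw [T.br_swap₁₂]
  exact I.neg_mem (hI a ha x y)

theorem IsIdeal.br_mem_right (hI : T.IsIdeal I) (x y : L) {a : L} (ha : a ∈ I) :
    T.br x y a ∈ I := by
  rw [T.br_swap₂₃]
  exact I.neg_mem (hI.br_mem_middle x ha y)

theorem IsIdeal.br_mem_of_not_linearIndependent (hI : T.IsIdeal I) {x y z : L}
    (hdep : ¬ LinearIndependent F ![I.mkQ x, I.mkQ y, I.mkQ z]) : T.br x y z ∈ I := by
  obtain ⟨c, hc, i, hci⟩ := Fintype.not_linearIndependent_iff.mp hdep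
  set w := c 0 • x + c 1 • y + c 2 • z
  have hw : w ∈ I := by
    rw [← Submodule.Quotient.mk_eq_zero]
    simpa [Fin.sum_univ_three, w] using hc
  have hmem : ∀ j, c j • T.br x y z ∈ I := by
    intro j
    fin_cases j
    · convert hI w hw y z using 1
      simp [w, T.alt₁₂, T.alt₁₃]
    · convert hI.br_mem_middle x hw z using 1
      simp [w, T.alt₁₂, T.alt₂₃]
    · convert hI.br_mem_right x y hw using 1
      simp [w, T.alt₁₃, T.alt₂₃]
  exact (Submodule.smul_mem_iff I hci).mp (hmem i)

theorem IsIdeal.derived_le_of_finrank_quotient_le_two (hI : T.IsIdeal I)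
    [FiniteDimensional F (L ⧸ I)] (hcodim : finrank F (L ⧸ I) ≤ 2) : T.derived ≤ I := by
  refine Submodule.span_le.mpr ?_
  rintro _ ⟨x, y, z, rfl⟩
  refine hI.br_mem_of_not_linearIndependent fun hli => ?_
  have := hli.fintype_card_le_finrank
  simp only [Fintype.card_fin] at this
  omega

end ThreeLie

/-- an `m`-dimensional 3-Lie algebra with an abelian ideal of dimension `m − 2`
is 2-step solvable: `[[L,L,L],[L,L,L],L] = 0`. -/
theorem two_step_solvable_of_abelianIdeal_codim_two {F : Type*} [Field F] {L : Type*}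
    [AddCommGroup L] [Module F L] [FiniteDimensional F L] (T : ThreeLie F L)
    (I : Submodule F L) (hI : T.IsAbelianIdeal I)
    (hcodim : finrank F I + 2 = finrank F L) :
    ∀ a ∈ T.derived, ∀ b ∈ T.derived, ∀ x : L, T.br a b x = 0 := by
  have hquot : finrank F (L ⧸ I) = 2 := by
    have := Submodule.finrank_quotient_add_finrank I
    omega
  have hder : T.derived ≤ I := hI.1.derived_le_of_finrank_quotient_le_two hquot.le
  intro a ha b hb x
  exact hI.2 a (hder ha) b (hder hb) x
end

section
/- Let L be the 4-dimensional 3-Lie algebra with basis x₁,x₂,x₃,x₄ and nonzero brackets [x₁,x₃,x₄]=x₂, [x₂,x₃,x₄]=x₁, [x₁,x₂,x₄]=x₃ (all other basis brackets zero). Then A = span{x₁,x₂,x₃} is an ideal of L satisfying [A,A,A]=0 but [A,A,L] ≠ 0 (a hypo-abelian ideal), and the maximal abelian ideal of L is 0, i.e. β(L)=0, while α(L)=3. -/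
open Module

/-!
Everything except `β(L) = 0` is read off the bracket table. Up to sign, the brackets of basis
vectors are `0`, `x 0`, `x 1`, `x 2`, so `A = span {x 0, x 1, x 2}` is an ideal; the only such
bracket inside `A` is `[x 0, x 1, x 2] = 0`, so `A` is abelian; and `[x 0, x 1, x 3] = x 2 ≠ 0`
shows both `[A, A, L] ≠ 0` and that `L` itself is not abelian, whence `α(L) = 3`.

If `I` is an abelian ideal and `a ∈ I`, then `[a, u, v] ∈ I`, so `[a, [a, u, v], w] = 0`.
Writing `a = ∑ cᵢ • x i`, the triple `(x 1, x 2, x 1)` gives `c₃² • x 2 = 0`, and then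
`(x 2, x 3, x 3)` and `(x 1, x 3, x 3)` give `c₀ c₁ = 0`, `c₀² = c₁²`, `c₀² + c₂² = 0`,
which force `a = 0` over any field.
-/

theorem range_comp_castSucc_fin_four {α : Type*} (v : Fin 4 → α) :
    Set.range (v ∘ Fin.castSucc : Fin 3 → α) = {v 0, v 1, v 2} := by
  ext
  simp [Fin.exists_fin_succ, eq_comm]

theorem eq_zero_of_mul_eq_zero_of_mul_self_eq {R : Type*} [CommRing R] [NoZeroDivisors R]
    {a b c : R} (hab : a * b = 0) (hsq : a * a = b * b) (hc : a * a + c * c = 0) :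
    a = 0 ∧ b = 0 ∧ c = 0 := by
  have ha : a = 0 := by
    rcases mul_eq_zero.1 hab with ha | hb
    · exact ha
    · rwa [hb, mul_zero, mul_self_eq_zero] at hsq
  have hb : b = 0 := by rwa [ha, mul_zero, eq_comm, mul_self_eq_zero] at hsq
  rw [ha, mul_zero, zero_add, mul_self_eq_zero] at hc
  exact ⟨ha, hb, hc⟩

namespace ThreeLie

variable {F : Type*} [Field F] {L : Type*} [AddCommGroup L] [Module F L] (T : ThreeLie F L)

theorem br_swap₁₂_s6 (a b c : L) : T.br b a c = -T.br a b c := by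
  refine eq_neg_of_add_eq_zero_right ?_
  simpa [T.alt₁₂] using T.alt₁₂ (a + b) c

theorem br_swap₂₃_s6 (a b c : L) : T.br a c b = -T.br a b c := by
  refine eq_neg_of_add_eq_zero_right ?_
  simpa [T.alt₂₃] using T.alt₂₃ a (b + c)

theorem alt₁₃_s6 (a b : L) : T.br a b a = 0 := by
  rw [T.br_swap₂₃_s6, T.alt₁₂, neg_zero]

theorem br_rotate (a b c : L) : T.br a b c = T.br b c a := by
  rw [T.br_swap₂₃_s6 b a c, T.br_swap₁₂_s6 a b c, neg_neg]

theorem br_mem_of_mem_span {s : Set L} {S : Submodule F L}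
    (h : ∀ a ∈ s, ∀ b ∈ s, ∀ c ∈ s, T.br a b c ∈ S) {a b c : L}
    (ha : a ∈ Submodule.span F s) (hb : b ∈ Submodule.span F s) (hc : c ∈ Submodule.span F s) :
    T.br a b c ∈ S := by
  have hc' : ∀ a ∈ s, ∀ b ∈ s, T.br a b c ∈ S := fun a ha b hb =>
    (Submodule.span_le (p := S.comap (T.br a b))).2 (h a ha b hb) hc
  have hb' : ∀ a ∈ s, T.br a b c ∈ S := fun a ha =>
    (Submodule.span_le (p := S.comap ((T.br a).flip c))).2 (hc' a ha) hb
  exact (Submodule.span_le (p := S.comap ((T.br.flip b).flip c))).2 hb' ha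

theorem br_mem_of_lt {ι : Type*} [LinearOrder ι] (v : ι → L) {S : Submodule F L}
    (h : ∀ i j k, i < j → j < k → T.br (v i) (v j) (v k) ∈ S) (i j k : ι) :
    T.br (v i) (v j) (v k) ∈ S := by
  have swap₁₂ {a b c : L} : T.br b a c ∈ S → T.br a b c ∈ S := by
    rw [T.br_swap₁₂_s6 b, S.neg_mem_iff]; exact id
  have swap₂₃ {a b c : L} : T.br a c b ∈ S → T.br a b c ∈ S := by
    rw [T.br_swap₂₃_s6 a c, S.neg_mem_iff]; exact id
  rcases lt_trichotomy i j with hij | hij | hij <;>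
  rcases lt_trichotomy j k with hjk | hjk | hjk <;>
  rcases lt_trichotomy i k with hik | hik | hik
  all_goals first
    | subst_vars; simp only [T.alt₁₂, T.alt₂₃, T.alt₁₃_s6, S.zero_mem]
    | exact h _ _ _ ‹_› ‹_›
    | exact swap₂₃ (h _ _ _ ‹_› ‹_›)
    | exact swap₁₂ (h _ _ _ ‹_› ‹_›)
    | exact swap₁₂ (swap₂₃ (h _ _ _ ‹_› ‹_›))
    | exact swap₂₃ (swap₁₂ (h _ _ _ ‹_› ‹_›))
    | exact swap₁₂ (swap₂₃ (swap₁₂ (h _ _ _ ‹_› ‹_›)))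

variable {T}

theorem IsAbelianSubalgebra.finrank_lt [FiniteDimensional F L] {A : Submodule F L}
    (hA : T.IsAbelianSubalgebra A) {a b c : L} (h : T.br a b c ≠ 0) :
    finrank F A < finrank F L := by
  refine Submodule.finrank_lt fun hA_top => h ?_
  subst hA_top
  exact hA a trivial b trivial c trivial

theorem IsAbelianIdeal.br_br_eq_zero {I : Submodule F L} (hI : T.IsAbelianIdeal I) {a : L}
    (ha : a ∈ I) (u v w : L) : T.br a (T.br a u v) w = 0 :=
  hI.2 a ha _ (hI.1 a ha u v) w

variable {x : Basis (Fin 4) F L}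

theorem isIdeal_span_first_three (h1 : T.br (x 0) (x 2) (x 3) = x 1)
    (h2 : T.br (x 1) (x 2) (x 3) = x 0) (h3 : T.br (x 0) (x 1) (x 3) = x 2)
    (h4 : T.br (x 0) (x 1) (x 2) = 0) : T.IsIdeal (Submodule.span F {x 0, x 1, x 2}) := by
  have hbasis : ∀ i j k, T.br (x i) (x j) (x k) ∈ Submodule.span F {x 0, x 1, x 2} := by
    refine T.br_mem_of_lt x fun i j k hij hjk => ?_
    fin_cases i <;> fin_cases j <;> fin_cases k <;> simp_all <;>
      exact Submodule.subset_span (by simp)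
  intro a _ u v
  refine T.br_mem_of_mem_span ?_ (x.mem_span a) (x.mem_span u) (x.mem_span v)
  rintro _ ⟨i, rfl⟩ _ ⟨j, rfl⟩ _ ⟨k, rfl⟩
  exact hbasis i j k

theorem isAbelianSubalgebra_span_first_three (h4 : T.br (x 0) (x 1) (x 2) = 0) :
    T.IsAbelianSubalgebra (Submodule.span F {x 0, x 1, x 2}) := by
  have hbasis : ∀ i j k : Fin 3,
      T.br (x i.castSucc) (x j.castSucc) (x k.castSucc) ∈ (⊥ : Submodule F L) := by
    refine T.br_mem_of_lt (x ∘ Fin.castSucc) fun i j k hij hjk => ?_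
    fin_cases i <;> fin_cases j <;> fin_cases k <;> simp_all
  intro a ha b hb c hc
  rw [← range_comp_castSucc_fin_four] at ha hb hc
  refine (Submodule.mem_bot F).1 (T.br_mem_of_mem_span ?_ ha hb hc)
  rintro _ ⟨i, rfl⟩ _ ⟨j, rfl⟩ _ ⟨k, rfl⟩
  exact hbasis i j k

theorem finrank_span_first_three : finrank F (Submodule.span F {x 0, x 1, x 2}) = 3 := by
  rw [← range_comp_castSucc_fin_four,
    finrank_span_eq_card (x.linearIndependent.comp _ (Fin.castSucc_injective 3)), Fintype.card_fin]

theorem coeff_three_eq_zero_of_mem_isAbelianIdeal (h2 : T.br (x 1) (x 2) (x 3) = x 0)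
    (h3 : T.br (x 0) (x 1) (x 3) = x 2) (h4 : T.br (x 0) (x 1) (x 2) = 0)
    {I : Submodule F L} (hI : T.IsAbelianIdeal I) {c₀ c₁ c₂ c₃ : F}
    (ha : c₀ • x 0 + c₁ • x 1 + c₂ • x 2 + c₃ • x 3 ∈ I) : c₃ = 0 := by
  set a := c₀ • x 0 + c₁ • x 1 + c₂ • x 2 + c₃ • x 3
  have br01 : T.br a (x 0) (x 1) = c₃ • x 2 := by
    simp [a, T.alt₁₂, T.alt₁₃_s6, T.br_rotate (x 2), T.br_rotate (x 3), h3, h4]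
  have br12 : T.br a (x 1) (x 2) = c₃ • x 0 := by
    simp [a, T.alt₁₂, T.alt₁₃_s6, T.br_rotate (x 3), h2, h4]
  have h := hI.br_br_eq_zero ha (x 1) (x 2) (x 1)
  rw [br12, map_smul, LinearMap.smul_apply, br01, smul_smul, smul_eq_zero] at h
  exact mul_self_eq_zero.1 (h.resolve_right (x.ne_zero 2))

theorem coeffs_eq_zero_of_mem_isAbelianIdeal (h1 : T.br (x 0) (x 2) (x 3) = x 1)
    (h2 : T.br (x 1) (x 2) (x 3) = x 0) (h3 : T.br (x 0) (x 1) (x 3) = x 2)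
    {I : Submodule F L} (hI : T.IsAbelianIdeal I) {c₀ c₁ c₂ : F}
    (ha : c₀ • x 0 + c₁ • x 1 + c₂ • x 2 ∈ I) : c₀ = 0 ∧ c₁ = 0 ∧ c₂ = 0 := by
  set a := c₀ • x 0 + c₁ • x 1 + c₂ • x 2
  have br03 : T.br a (x 0) (x 3) = -(c₁ • x 2) - c₂ • x 1 := by
    simp [a, T.alt₁₂, T.br_swap₁₂_s6 (x 0) (x 1), T.br_swap₁₂_s6 (x 0) (x 2), h1, h3, sub_eq_add_neg]
  have br13 : T.br a (x 1) (x 3) = c₀ • x 2 - c₂ • x 0 := by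
    simp [a, T.alt₁₂, T.br_swap₁₂_s6 (x 1) (x 2), h2, h3, sub_eq_add_neg]
  have br23 : T.br a (x 2) (x 3) = c₀ • x 1 + c₁ • x 0 := by
    simp [a, T.alt₁₂, h1, h2]
  have e₁ : (-(c₀ * c₂)) • x 0 + (-(c₁ * c₂)) • x 1 + (c₀ * c₀ - c₁ * c₁) • x 2 = 0 := by
    rw [← hI.br_br_eq_zero ha (x 2) (x 3) (x 3), br23]
    simp only [map_add, map_smul, LinearMap.add_apply, LinearMap.smul_apply, br13, br03]
    module
  have e₂ : (c₀ * c₁) • x 0 + (c₀ * c₀ + c₂ * c₂) • x 1 + (c₁ * c₂) • x 2 = 0 := by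
    rw [← hI.br_br_eq_zero ha (x 1) (x 3) (x 3), br13]
    simp only [map_sub, map_smul, LinearMap.sub_apply, LinearMap.smul_apply, br23, br03]
    module
  refine eq_zero_of_mul_eq_zero_of_mul_self_eq (by simpa using congrArg (x.coord 0) e₂) ?_
    (by simpa using congrArg (x.coord 1) e₂)
  simpa [sub_eq_zero] using congrArg (x.coord 2) e₁

theorem isAbelianIdeal_eq_bot (h1 : T.br (x 0) (x 2) (x 3) = x 1)
    (h2 : T.br (x 1) (x 2) (x 3) = x 0) (h3 : T.br (x 0) (x 1) (x 3) = x 2)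
    (h4 : T.br (x 0) (x 1) (x 2) = 0) {I : Submodule F L} (hI : T.IsAbelianIdeal I) : I = ⊥ := by
  refine (Submodule.eq_bot_iff I).2 fun a ha => ?_
  rw [← x.sum_repr a, Fin.sum_univ_four] at ha ⊢
  have h₃ := coeff_three_eq_zero_of_mem_isAbelianIdeal h2 h3 h4 hI ha
  rw [h₃, zero_smul, add_zero] at ha ⊢
  obtain ⟨h₀, h₁, h₂⟩ := coeffs_eq_zero_of_mem_isAbelianIdeal h1 h2 h3 hI ha
  simp [h₀, h₁, h₂]

end ThreeLie

open ThreeLie in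
/-- for the 4-dimensional 3-Lie algebra with nonzero brackets
`[x₁,x₃,x₄]=x₂`, `[x₂,x₃,x₄]=x₁`, `[x₁,x₂,x₄]=x₃` (and `[x₁,x₂,x₃]=0`),
`A = span{x₁,x₂,x₃}` is a hypo-abelian ideal, `β(L) = 0` and `α(L) = 3`. -/
theorem hypoAbelian_example {F : Type*} [Field F] {L : Type*}
    [AddCommGroup L] [Module F L] (T : ThreeLie F L) (x : Basis (Fin 4) F L)
    (h1 : T.br (x 0) (x 2) (x 3) = x 1) (h2 : T.br (x 1) (x 2) (x 3) = x 0)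
    (h3 : T.br (x 0) (x 1) (x 3) = x 2) (h4 : T.br (x 0) (x 1) (x 2) = 0) :
    T.IsHypoAbelianIdeal (Submodule.span F {x 0, x 1, x 2}) ∧
    (∀ I : Submodule F L, T.IsAbelianIdeal I → finrank F I = 0) ∧
    (∃ A : Submodule F L, T.IsAbelianSubalgebra A ∧ finrank F A = 3) ∧
    (∀ A : Submodule F L, T.IsAbelianSubalgebra A → finrank F A ≤ 3) := by
  have habelian := isAbelianSubalgebra_span_first_three h4
  have hbr : T.br (x 0) (x 1) (x 3) ≠ 0 := h3 ▸ x.ne_zero 2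
  refine ⟨⟨isIdeal_span_first_three h1 h2 h3 h4, habelian, fun h => hbr ?_⟩,
    fun I hI => by rw [isAbelianIdeal_eq_bot h1 h2 h3 h4 hI, finrank_bot],
    ⟨_, habelian, finrank_span_first_three⟩, fun A hA => ?_⟩
  · exact h _ (Submodule.subset_span (by simp)) _ (Submodule.subset_span (by simp)) _
  · have : FiniteDimensional F L := x.finiteDimensional_of_finite
    have := hA.finrank_lt hbr
    rw [finrank_eq_card_basis x, Fintype.card_fin] at this
    omega
end

section
/- Let L be the 4-dimensional 3-Lie algebra over a field of characteristic 0 with basis x₁,x₂,x₃,x₄ and the single nonzero bracket [x₁,x₂,x₃]=x₄. Then L is nilpotent, A = span{x₁,x₂,x₄} is a 3-dimensional subspace with [A,A,A]=0 that is an ideal, I = span{x₁,x₄} is an abelian ideal ([I,I,L]=0), and α(L) = 3 > β(L) = 2. In particular, for nilpotent 3-Lie algebras the maximal dimensions of abelian subalgebras and abelian ideals may differ. -/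
open Module

/-! In coordinates with respect to `x`, the bracket is `[u, v, w] = det(u, v, w) • x 3`, where the
determinant is taken of the first three coordinates. So every bracket lies in the central line
spanned by `x 3`, which makes `L` two-step nilpotent, and a span of basis vectors is abelian as soon
as each triple of its generators repeats a vector or contains `x 3`. No abelian subalgebra is all
of `L`, because `[x 0, x 1, x 2] ≠ 0`. If `I` is an abelian ideal, then `[a, b, ·] = 0` for
`a, b ∈ I` forces the cross product of their coordinate vectors to vanish, so `I` projects onto a
subspace of `F³` of dimension at most one, and the kernel of the projection is the line of `x 3`. -/

open Matrix Submodule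

section LinearAlgebra

variable {K V W : Type*} [Field K] [AddCommGroup V] [Module K V] [AddCommGroup W] [Module K W]

lemma Submodule.finrank_le_finrank_map_add_finrank_ker [FiniteDimensional K V]
    (p : Submodule K V) (f : V →ₗ[K] W) :
    finrank K p ≤ finrank K (p.map f) + finrank K (LinearMap.ker f) := by
  have h := (f.domRestrict p).finrank_range_add_finrank_ker
  rw [LinearMap.range_domRestrict, LinearMap.ker_domRestrict,
    ← finrank_map_subtype_eq, map_comap_subtype] at h
  have := Submodule.finrank_mono (inf_le_right : p ⊓ LinearMap.ker f ≤ LinearMap.ker f)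
  omega

lemma Submodule.finrank_le_one_of_not_linearIndependent [FiniteDimensional K W]
    (p : Submodule K W) (h : ∀ v ∈ p, ∀ w ∈ p, ¬LinearIndependent K ![v, w]) :
    finrank K p ≤ 1 := by
  by_contra! hp
  obtain ⟨v, hv⟩ := (Module.finrank_pos_iff_exists_ne_zero (R := K)).mp (by omega : 0 < finrank K p)
  obtain ⟨w, hw⟩ := exists_linearIndependent_pair_of_one_lt_finrank hp hv
  refine h v v.2 w w.2 ?_
  have hvw : p.subtype ∘ ![v, w] = ![(v : W), w] := by
    ext i
    fin_cases i <;> rfl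
  exact hvw ▸ hw.map' p.subtype p.ker_subtype

lemma Module.Basis.finrank_span_image {ι : Type*} (x : Basis ι K V) (s : Finset ι) :
    finrank K (span K (x '' s)) = s.card := by
  rw [Set.image_eq_range, finrank_span_eq_card (b := fun i : (s : Set ι) => x i)
    (x.linearIndependent.comp _ Subtype.val_injective)]
  simp

end LinearAlgebra

namespace Module.Basis

variable {F : Type*} [Field F] {L : Type*} [AddCommGroup L] [Module F L] {n : ℕ}

noncomputable def initCoords (x : Basis (Fin (n + 1)) F L) : L →ₗ[F] Fin n → F :=
  LinearMap.funLeft F F (Fin.castSucc (n := n)) ∘ₗ x.equivFun.toLinearMap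

@[simp]
lemma initCoords_apply (x : Basis (Fin (n + 1)) F L) (u : L) (i : Fin n) :
    x.initCoords u i = x.repr u i.castSucc := rfl

lemma initCoords_surjective (x : Basis (Fin (n + 1)) F L) : Function.Surjective x.initCoords :=
  (LinearMap.funLeft_surjective_of_injective F F _ (Fin.castSucc_injective n)).comp
    x.equivFun.surjective

lemma finrank_ker_initCoords (x : Basis (Fin (n + 1)) F L) :
    finrank F (LinearMap.ker x.initCoords) = 1 := by
  have := Module.Finite.of_basis x
  have h := x.initCoords.finrank_range_add_finrank_ker
  rw [LinearMap.range_eq_top.mpr x.initCoords_surjective, finrank_top, Module.finrank_fin_fun,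
    finrank_eq_card_basis x, Fintype.card_fin] at h
  omega

lemma initCoords_last (x : Basis (Fin (n + 1)) F L) : x.initCoords (x (Fin.last n)) = 0 := by
  ext i
  simp [(Fin.castSucc_lt_last i).ne]

end Module.Basis

namespace ThreeLie

variable {F : Type*} [Field F] {L : Type*} [AddCommGroup L] [Module F L] (T : ThreeLie F L)

@[simp]
lemma br_self_left (u w : L) : T.br u u w = 0 := T.alt₁₂ u w

@[simp]
lemma br_self_right (u v : L) : T.br u v v = 0 := T.alt₂₃ u v

lemma br_swap₁₂_s7 (u v w : L) : T.br v u w = -T.br u v w := by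
  have h := T.alt₁₂ (u + v) w
  simp only [map_add, LinearMap.add_apply, br_self_left, zero_add, add_zero] at h
  exact eq_neg_of_add_eq_zero_left h

lemma br_swap₂₃_s7 (u v w : L) : T.br u w v = -T.br u v w := by
  have h := T.alt₂₃ u (v + w)
  simp only [map_add, LinearMap.add_apply, br_self_right, zero_add, add_zero] at h
  exact eq_neg_of_add_eq_zero_left h

@[simp]
lemma br_self_left_right (u v : L) : T.br u v u = 0 := by
  rw [← neg_eq_zero, ← br_swap₂₃_s7, br_self_left]

lemma br_perms {u v w z : L} (h : T.br u v w = z) :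
    T.br u w v = -z ∧ T.br v u w = -z ∧ T.br v w u = z ∧ T.br w u v = z ∧ T.br w v u = -z := by
  refine ⟨?_, ?_, ?_, ?_, ?_⟩
  · rw [br_swap₂₃_s7, h]
  · rw [br_swap₁₂_s7, h]
  · rw [br_swap₂₃_s7, br_swap₁₂_s7, h, neg_neg]
  · rw [br_swap₁₂_s7, br_swap₂₃_s7, h, neg_neg]
  · rw [br_swap₁₂_s7, br_swap₂₃_s7, br_swap₁₂_s7, h, neg_neg]

lemma br_eq_zero_of_mem_center {z : L} (hz : z ∈ T.center) (u v : L) :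
    T.br z u v = 0 ∧ T.br u z v = 0 ∧ T.br u v z = 0 := by
  have h := T.br_perms (hz u v)
  simp only [neg_zero] at h
  exact ⟨hz u v, h.2.1, h.2.2.1⟩

lemma br_eq_zero_of_mem_span {s t r : Set L} (h : ∀ a ∈ s, ∀ b ∈ t, ∀ c ∈ r, T.br a b c = 0)
    {a b c : L} (ha : a ∈ span F s) (hb : b ∈ span F t) (hc : c ∈ span F r) :
    T.br a b c = 0 := by
  have hc' : ∀ a ∈ s, ∀ b ∈ t, T.br a b c = 0 := fun a ha b hb =>
    LinearMap.eqOn_span' (g := 0) (h a ha b hb) hc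
  have hb' : ∀ a ∈ s, T.br a b c = 0 := fun a ha =>
    LinearMap.eqOn_span' (f := (T.br a).flip c) (g := 0) (hc' a ha) hb
  exact LinearMap.eqOn_span' (f := (T.br.flip b).flip c) (g := 0) hb' ha

lemma isNilpotent_of_br_mem_center (h : ∀ u v w, T.br u v w ∈ T.center) : T.IsNilpotent := by
  have h1 : T.lcs 1 ≤ T.center := span_le.mpr <| by
    rintro _ ⟨a, -, u, v, rfl⟩
    exact h a u v
  refine ⟨2, eq_bot_iff.mpr <| span_le.mpr ?_⟩
  rintro _ ⟨a, ha, u, v, rfl⟩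
  exact (h1 ha u v).symm ▸ zero_mem ⊥

lemma finrank_lt_of_isAbelianSubalgebra [FiniteDimensional F L] {A : Submodule F L}
    (hA : T.IsAbelianSubalgebra A) {u v w : L} (h : T.br u v w ≠ 0) : finrank F A < finrank F L := by
  refine Submodule.finrank_lt fun hA_top => h ?_
  subst hA_top
  exact hA u trivial v trivial w trivial

def IsTripleProductBracket (π : L →ₗ[F] Fin 3 → F) (z : L) : Prop :=
  ∀ u v w, T.br u v w = (π u ⬝ᵥ π v ⨯₃ π w) • z

namespace IsTripleProductBracket

variable {T} {π : L →ₗ[F] Fin 3 → F} {z : L} (hbr : T.IsTripleProductBracket π z)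
include hbr

lemma br_mem_span (u v w : L) : T.br u v w ∈ span F {z} :=
  hbr u v w ▸ smul_mem _ _ (mem_span_singleton_self z)

lemma isIdeal {I : Submodule F L} (hz : z ∈ I) : T.IsIdeal I := fun a _ u v =>
  (span_singleton_le_iff_mem z I).mpr hz (hbr.br_mem_span a u v)

lemma mem_center (hπz : π z = 0) : z ∈ T.center := fun u v => by
  rw [hbr, hπz, zero_dotProduct, zero_smul]

lemma isNilpotent (hπz : π z = 0) : T.IsNilpotent :=
  T.isNilpotent_of_br_mem_center fun u v w =>
    (span_singleton_le_iff_mem z _).mpr (hbr.mem_center hπz) (hbr.br_mem_span u v w)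

lemma cross_eq_zero (hz : z ≠ 0) (hπ : Function.Surjective π) {a b : L}
    (hab : ∀ w, T.br a b w = 0) : π a ⨯₃ π b = 0 := by
  refine dotProduct_eq_zero _ fun y => ?_
  obtain ⟨w, rfl⟩ := hπ y
  have h := hab w
  rw [hbr, smul_eq_zero, or_iff_left hz, triple_product_permutation,
    triple_product_permutation] at h
  rwa [dotProduct_comm]

lemma finrank_le_of_isAbelianIdeal [FiniteDimensional F L] (hz : z ≠ 0)
    (hπ : Function.Surjective π) {I : Submodule F L} (hI : T.IsAbelianIdeal I) :
    finrank F I ≤ 1 + finrank F (LinearMap.ker π) := by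
  have hmap : finrank F (I.map π) ≤ 1 := by
    refine (I.map π).finrank_le_one_of_not_linearIndependent ?_
    rintro _ ⟨a, ha, rfl⟩ _ ⟨b, hb, rfl⟩
    rw [← crossProduct_ne_zero_iff_linearIndependent, not_not]
    exact hbr.cross_eq_zero hz hπ (hI.2 a ha b hb)
  have := I.finrank_le_finrank_map_add_finrank_ker π
  omega

end IsTripleProductBracket

lemma isTripleProductBracket_of_basis (x : Basis (Fin 4) F L)
    (h1 : T.br (x 0) (x 1) (x 2) = x 3) (h2 : T.br (x 0) (x 1) (x 3) = 0)
    (h3 : T.br (x 0) (x 2) (x 3) = 0) (h4 : T.br (x 1) (x 2) (x 3) = 0) :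
    T.IsTripleProductBracket x.initCoords (x 3) := by
  intro u v w
  conv_lhs => rw [← x.sum_repr u, ← x.sum_repr v, ← x.sum_repr w]
  simp only [map_add, map_smul, LinearMap.add_apply, LinearMap.smul_apply, Fin.sum_univ_four,
    br_self_left, br_self_right, br_self_left_right, h1, h2, h3, h4, T.br_perms h1, T.br_perms h2,
    T.br_perms h3, T.br_perms h4, smul_zero, smul_neg, neg_zero, add_zero, zero_add,
    dotProduct, cross_apply, Fin.sum_univ_three, Basis.initCoords_apply, Fin.castSucc_zero,
    Fin.castSucc_one, Fin.reduceCastSucc, cons_val_zero, cons_val_one, cons_val]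
  module

end ThreeLie

theorem nilpotent_alpha_ne_beta_general {F : Type*} [Field F] {L : Type*}
    [AddCommGroup L] [Module F L] (T : ThreeLie F L) (x : Basis (Fin 4) F L)
    (h1 : T.br (x 0) (x 1) (x 2) = x 3) (h2 : T.br (x 0) (x 1) (x 3) = 0)
    (h3 : T.br (x 0) (x 2) (x 3) = 0) (h4 : T.br (x 1) (x 2) (x 3) = 0) :
    T.IsNilpotent ∧
    T.IsIdeal (Submodule.span F {x 0, x 1, x 3}) ∧
    T.IsAbelianSubalgebra (Submodule.span F {x 0, x 1, x 3}) ∧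
    T.IsAbelianIdeal (Submodule.span F {x 0, x 3}) ∧
    (∃ A : Submodule F L, T.IsAbelianSubalgebra A ∧ finrank F A = 3) ∧
    (∀ A : Submodule F L, T.IsAbelianSubalgebra A → finrank F A ≤ 3) ∧
    (∃ I : Submodule F L, T.IsAbelianIdeal I ∧ finrank F I = 2) ∧
    (∀ I : Submodule F L, T.IsAbelianIdeal I → finrank F I ≤ 2) := by
  have := Module.Finite.of_basis x
  have hbr := T.isTripleProductBracket_of_basis x h1 h2 h3 h4
  have hx3 : x.initCoords (x 3) = 0 := x.initCoords_last
  have hcenter := T.br_eq_zero_of_mem_center (hbr.mem_center hx3)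
  have hA : T.IsAbelianSubalgebra (span F {x 0, x 1, x 3}) := fun a ha b hb c hc =>
    T.br_eq_zero_of_mem_span (by
      simp only [Set.mem_insert_iff, Set.mem_singleton_iff]
      rintro a (rfl | rfl | rfl) b (rfl | rfl | rfl) c (rfl | rfl | rfl) <;> simp [hcenter]) ha hb hc
  have hI : T.IsAbelianIdeal (span F {x 0, x 3}) := ⟨hbr.isIdeal (subset_span (by simp)),
    fun a ha b hb c => T.br_eq_zero_of_mem_span (r := Set.univ) (by
      simp only [Set.mem_insert_iff, Set.mem_singleton_iff]
      rintro a (rfl | rfl) b (rfl | rfl) c - <;> simp [hcenter]) ha hb (by simp)⟩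
  refine ⟨hbr.isNilpotent hx3, hbr.isIdeal (subset_span (by simp)), hA, hI, ⟨_, hA, ?_⟩,
    fun A hA => ?_, ⟨_, hI, ?_⟩, fun I hI => ?_⟩
  · rw [show ({x 0, x 1, x 3} : Set L) = x '' ({0, 1, 3} : Finset (Fin 4)) by
      simp [Set.image_insert_eq], x.finrank_span_image]
    rfl
  · have := T.finrank_lt_of_isAbelianSubalgebra hA (h1 ▸ x.ne_zero 3)
    rw [finrank_eq_card_basis x, Fintype.card_fin] at this
    omega
  · rw [show ({x 0, x 3} : Set L) = x '' ({0, 3} : Finset (Fin 4)) by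
      simp [Set.image_insert_eq], x.finrank_span_image]
    rfl
  · have := hbr.finrank_le_of_isAbelianIdeal (x.ne_zero 3) x.initCoords_surjective hI
    rw [x.finrank_ker_initCoords] at this
    omega

/-- the 4-dimensional 3-Lie algebra with single nonzero bracket
`[x₁,x₂,x₃]=x₄` is nilpotent, `A = span{x₁,x₂,x₄}` is an ideal with `[A,A,A]=0`,
`I = span{x₁,x₄}` is an abelian ideal, and `α(L) = 3 > β(L) = 2`. -/
theorem nilpotent_alpha_ne_beta {F : Type*} [Field F] [CharZero F] {L : Type*}
    [AddCommGroup L] [Module F L] (T : ThreeLie F L) (x : Basis (Fin 4) F L)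
    (h1 : T.br (x 0) (x 1) (x 2) = x 3) (h2 : T.br (x 0) (x 1) (x 3) = 0)
    (h3 : T.br (x 0) (x 2) (x 3) = 0) (h4 : T.br (x 1) (x 2) (x 3) = 0) :
    T.IsNilpotent ∧
    T.IsIdeal (Submodule.span F {x 0, x 1, x 3}) ∧
    T.IsAbelianSubalgebra (Submodule.span F {x 0, x 1, x 3}) ∧
    T.IsAbelianIdeal (Submodule.span F {x 0, x 3}) ∧
    (∃ A : Submodule F L, T.IsAbelianSubalgebra A ∧ finrank F A = 3) ∧
    (∀ A : Submodule F L, T.IsAbelianSubalgebra A → finrank F A ≤ 3) ∧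
    (∃ I : Submodule F L, T.IsAbelianIdeal I ∧ finrank F I = 2) ∧
    (∀ I : Submodule F L, T.IsAbelianIdeal I → finrank F I ≤ 2) :=
  nilpotent_alpha_ne_beta_general T x h1 h2 h3 h4
end

section
/- Let L be a nilpotent finite-dimensional 3-Lie algebra with α(L) = dim L − 1. Then L has a hypo-abelian ideal of codimension 1; specifically, any abelian subalgebra A of codimension 1 satisfies [A,A,L] ⊆ A (so A is an ideal with [A,A,A]=0). -/
open Module

/-!
Write `L = A ⊕ F w`. For `a, b ∈ A` put `u = [a, b, w] = c + α w` with `c ∈ A`. Since `A` is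
abelian, `ad(a, b) u = α u`, and `ad(a, b)` is nilpotent because `L` is, so `α = 0` or `u = 0`;
either way `u ∈ A`. Hence `[A, A, L] ⊆ A`, and alternation of the bracket upgrades this to
`[A, L, L] ⊆ A`.
-/

theorem Module.End.eq_zero_or_eq_zero_of_apply_eq_smul {K V : Type*} [Field K] [AddCommGroup V]
    [Module K V] {f : End K V} (hf : IsNilpotent f) {α : K} {v : V} (hv : f v = α • v) :
    α = 0 ∨ v = 0 := by
  rcases eq_or_ne v 0 with rfl | hv₀
  · exact Or.inr rfl
  · have hα : f.HasEigenvalue α :=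
      End.hasEigenvalue_of_hasEigenvector ⟨End.mem_eigenspace_iff.2 hv, hv₀⟩
    exact Or.inl (hα.isNilpotent_of_isNilpotent hf).eq_zero

theorem Submodule.exists_eq_add_smul_of_finrank_add_one {K V : Type*} [Field K] [AddCommGroup V]
    [Module K V] [FiniteDimensional K V] {A : Submodule K V} (hA : finrank K A + 1 = finrank K V) :
    ∃ w : V, ∀ x : V, ∃ c ∈ A, ∃ t : K, x = c + t • w := by
  have hA_ne_top : A ≠ ⊤ := by
    rintro rfl
    rw [finrank_top] at hA
    omega
  obtain ⟨w, -, hw⟩ := SetLike.exists_of_lt (lt_top_iff_ne_top.2 hA_ne_top)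
  have hsup : A ⊔ span K {w} = ⊤ :=
    eq_top_of_finrank_eq (by rw [finrank_sup_span_singleton hw, hA])
  refine ⟨w, fun x => ?_⟩
  obtain ⟨c, hc, _, hm, rfl⟩ := mem_sup.1 (hsup ▸ mem_top : x ∈ A ⊔ span K {w})
  obtain ⟨t, rfl⟩ := mem_span_singleton.1 hm
  exact ⟨c, hc, t, rfl⟩

namespace ThreeLie

variable {F : Type*} [Field F] {L : Type*} [AddCommGroup L] [Module F L] (T : ThreeLie F L)

theorem br_rotate_s13 (x y z : L) : T.br x y z = T.br z x y := by
  rw [T.br_swap₂₃ x y z, T.br_swap₁₂ x z y, neg_neg]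

theorem br_mem_lcs_succ {n : ℕ} {a : L} (ha : a ∈ T.lcs n) (x y : L) :
    T.br a x y ∈ T.lcs (n + 1) :=
  Submodule.subset_span ⟨a, ha, x, y, rfl⟩

theorem pow_br_apply_mem_lcs (a b x : L) (n : ℕ) : (T.br a b ^ n) x ∈ T.lcs n := by
  induction n with
  | zero => exact Submodule.mem_top
  | succ n ih =>
    rw [pow_succ', Module.End.mul_apply, br_rotate_s13]
    exact T.br_mem_lcs_succ ih a b

variable {T}

theorem IsNilpotent.isNilpotent_br (hT : T.IsNilpotent) (a b : L) :
    _root_.IsNilpotent (T.br a b) := by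
  obtain ⟨s, hs⟩ := hT
  refine ⟨s, LinearMap.ext fun x => ?_⟩
  simpa [hs] using T.pow_br_apply_mem_lcs a b x s

theorem IsAbelianSubalgebra.br_mem_of_isNilpotent {A : Submodule F L}
    (hA : T.IsAbelianSubalgebra A) (hT : T.IsNilpotent) {w : L}
    (hw : ∀ x : L, ∃ c ∈ A, ∃ t : F, x = c + t • w) {a b : L} (ha : a ∈ A) (hb : b ∈ A) :
    T.br a b w ∈ A := by
  obtain ⟨c, hc, α, hu⟩ := hw (T.br a b w)
  have heigen : T.br a b (T.br a b w) = α • T.br a b w := by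
    conv_lhs => rw [hu]
    rw [map_add, map_smul, hA a ha b hb c hc, zero_add]
  rcases Module.End.eq_zero_or_eq_zero_of_apply_eq_smul (hT.isNilpotent_br a b) heigen
    with rfl | hzero
  · simpa [hu] using hc
  · simp [hzero]

theorem isIdeal_of_br_mem {A : Submodule F L} {w : L}
    (hw : ∀ x : L, ∃ c ∈ A, ∃ t : F, x = c + t • w)
    (hAAL : ∀ a ∈ A, ∀ b ∈ A, ∀ x : L, T.br a b x ∈ A) : T.IsIdeal A := by
  intro a ha x y
  obtain ⟨c, hc, t, rfl⟩ := hw x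
  obtain ⟨d, hd, r, rfl⟩ := hw y
  have hawd : T.br a w d ∈ A := by
    rw [T.br_swap₂₃]
    exact A.neg_mem (hAAL a ha d hd w)
  simp only [map_add, map_smul, LinearMap.add_apply, LinearMap.smul_apply, T.alt₂₃, smul_zero,
    add_zero]
  exact A.add_mem (A.add_mem (hAAL a ha c hc d) (A.smul_mem t hawd))
    (A.smul_mem r (hAAL a ha c hc w))

end ThreeLie

theorem nilpotent_hyperplane_is_ideal_general {F : Type*} [Field F] {L : Type*}
    [AddCommGroup L] [Module F L] [FiniteDimensional F L] (T : ThreeLie F L)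
    (hnil : T.IsNilpotent) :
    ∀ A : Submodule F L, T.IsAbelianSubalgebra A → finrank F A + 1 = finrank F L →
      (∀ a ∈ A, ∀ b ∈ A, ∀ x : L, T.br a b x ∈ A) ∧ T.IsIdeal A := by
  intro A hA hdim
  obtain ⟨w, hw⟩ := Submodule.exists_eq_add_smul_of_finrank_add_one hdim
  have hAAL : ∀ a ∈ A, ∀ b ∈ A, ∀ x : L, T.br a b x ∈ A := by
    intro a ha b hb x
    obtain ⟨c, hc, t, rfl⟩ := hw x
    rw [map_add, map_smul, hA a ha b hb c hc, zero_add]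
    exact A.smul_mem t (hA.br_mem_of_isNilpotent hnil hw ha hb)
  exact ⟨hAAL, ThreeLie.isIdeal_of_br_mem hw hAAL⟩

/-- in a nilpotent finite-dimensional 3-Lie algebra with `α(L) = dim L − 1`,
any abelian subalgebra `A` of codimension 1 satisfies `[A,A,L] ⊆ A`, and indeed is an
ideal; hence `L` has a hypo-abelian ideal of codimension 1. -/
theorem nilpotent_hyperplane_is_ideal {F : Type*} [Field F] {L : Type*}
    [AddCommGroup L] [Module F L] [FiniteDimensional F L] (T : ThreeLie F L)
    (hnil : T.IsNilpotent)
    (hα₁ : ∃ A : Submodule F L, T.IsAbelianSubalgebra A ∧ finrank F A + 1 = finrank F L)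
    (hα₂ : ∀ A : Submodule F L, T.IsAbelianSubalgebra A → finrank F A + 1 ≤ finrank F L) :
    ∀ A : Submodule F L, T.IsAbelianSubalgebra A → finrank F A + 1 = finrank F L →
      (∀ a ∈ A, ∀ b ∈ A, ∀ x : L, T.br a b x ∈ A) ∧ T.IsIdeal A :=
  nilpotent_hyperplane_is_ideal_general T hnil
end
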